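/- arXiv:1312.4727 — 3 statements merged into one kernel-verified Lean document; each statement's English description precedes it below -/
import Mathlib

section
/- For real numbers a < b and any natural number n, the integral ∫_a^b ((x-a)(b-x))^3 cos²(nx) dx equals (b-a)^7/280 + O(n^{-4}) as n → ∞; more precisely, the difference between the integral and (b-a)^7/280 is bounded by C/n^4 for some constant C depending only on a and b (for all n ≥ 1). -/
/-!
Write cos² (n x) = (1 + cos (2 n x)) / 2; the constant half integrates to (b - a)⁷ / 280.
The weight ((x - a)(b - x))³ is a polynomial with triple roots at a and b, so integrating it
by parts three times against cos (2 n x) or sin (2 n x) produces no boundary terms and gains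
a factor 1 / (2 n) each time; a fourth integration by parts, now with bounded boundary terms,
gains one more.
-/

open Real MeasureTheory Set Polynomial

section IntegrationByParts

variable {f f' v v' : ℝ → ℝ} {a b c : ℝ}

theorem hasDerivAt_sin_mul_div (hc : c ≠ 0) (x : ℝ) :
    HasDerivAt (fun x => sin (c * x) / c) (cos (c * x)) x :=
  ((((hasDerivAt_id' x).const_mul c).sin).div_const c).congr_deriv (by field_simp)

theorem hasDerivAt_neg_cos_mul_div (hc : c ≠ 0) (x : ℝ) :
    HasDerivAt (fun x => -cos (c * x) / c) (sin (c * x)) x :=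
  ((((hasDerivAt_id' x).const_mul c).cos.neg).div_const c).congr_deriv (by field_simp)

theorem abs_integral_mul_deriv_le (hf : ∀ x ∈ uIcc a b, HasDerivAt f (f' x) x)
    (hv : ∀ x ∈ uIcc a b, HasDerivAt v (v' x) x) (hf' : IntervalIntegrable f' volume a b)
    (hv' : IntervalIntegrable v' volume a b) {M B : ℝ} (hM : ∀ x ∈ uIoc a b, |f' x| ≤ M)
    (hB : ∀ x, |v x| ≤ B) :
    |∫ x in a..b, f x * v' x| ≤ (|f a| + |f b| + M * |b - a|) * B := by
  have hB₀ : 0 ≤ B := (abs_nonneg _).trans (hB a)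
  have hI : |∫ x in a..b, f' x * v x| ≤ M * B * |b - a| := by
    rw [← Real.norm_eq_abs]
    refine intervalIntegral.norm_integral_le_of_norm_le_const fun x hx => ?_
    rw [Real.norm_eq_abs, abs_mul]
    exact mul_le_mul (hM x hx) (hB x) (abs_nonneg _) ((abs_nonneg _).trans (hM x hx))
  have ha : |f a * v a| ≤ |f a| * B := by rw [abs_mul]; gcongr; exact hB a
  have hb : |f b * v b| ≤ |f b| * B := by rw [abs_mul]; gcongr; exact hB b
  rw [intervalIntegral.integral_mul_deriv_eq_deriv_mul hf hv hf' hv']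
  rw [abs_le] at hI ha hb ⊢
  constructor <;> linarith

theorem integral_mul_cos_eq_of_eq_zero (hf : ∀ x ∈ uIcc a b, HasDerivAt f (f' x) x)
    (hf' : IntervalIntegrable f' volume a b) (ha : f a = 0) (hb : f b = 0) (hc : c ≠ 0) :
    ∫ x in a..b, f x * cos (c * x) = -(∫ x in a..b, f' x * sin (c * x)) / c := by
  have hcos : IntervalIntegrable (fun x => cos (c * x)) volume a b :=
    (by fun_prop : Continuous fun x => cos (c * x)).intervalIntegrable a b
  rw [intervalIntegral.integral_mul_deriv_eq_deriv_mul hf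
    (fun x _ => hasDerivAt_sin_mul_div hc x) hf' hcos, ha, hb]
  simp only [mul_div_assoc', intervalIntegral.integral_div]
  ring

theorem integral_mul_sin_eq_of_eq_zero (hf : ∀ x ∈ uIcc a b, HasDerivAt f (f' x) x)
    (hf' : IntervalIntegrable f' volume a b) (ha : f a = 0) (hb : f b = 0) (hc : c ≠ 0) :
    ∫ x in a..b, f x * sin (c * x) = (∫ x in a..b, f' x * cos (c * x)) / c := by
  have hsin : IntervalIntegrable (fun x => sin (c * x)) volume a b :=
    (by fun_prop : Continuous fun x => sin (c * x)).intervalIntegrable a b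
  rw [intervalIntegral.integral_mul_deriv_eq_deriv_mul hf
    (fun x _ => hasDerivAt_neg_cos_mul_div hc x) hf' hsin, ha, hb]
  simp only [neg_div, mul_neg, intervalIntegral.integral_neg, mul_div_assoc',
    intervalIntegral.integral_div]
  ring

end IntegrationByParts

namespace Polynomial

variable (p : ℝ[X]) (a b : ℝ)

theorem exists_abs_integral_mul_cos_le_and_sin_le :
    ∃ K, ∀ c > 0, |∫ x in a..b, p.eval x * cos (c * x)| ≤ K / c ∧
      |∫ x in a..b, p.eval x * sin (c * x)| ≤ K / c := by
  obtain ⟨M, hM⟩ := (isCompact_uIcc (a := a) (b := b)).exists_bound_of_continuousOn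
    (derivative p).continuous.continuousOn
  refine ⟨|p.eval a| + |p.eval b| + M * |b - a|, fun c hc => ?_⟩
  have hp : ∀ x ∈ uIcc a b, HasDerivAt (fun x => p.eval x) ((derivative p).eval x) x :=
    fun x _ => p.hasDerivAt x
  have hp' : IntervalIntegrable (fun x => (derivative p).eval x) volume a b :=
    (derivative p).continuous.intervalIntegrable a b
  have hM' : ∀ x ∈ uIoc a b, |(derivative p).eval x| ≤ M :=
    fun x hx => hM x (uIoc_subset_uIcc hx)
  have hB : ∀ x, |sin (c * x) / c| ≤ 1 / c := fun x => by
    rw [abs_div, abs_of_pos hc]; gcongr; exact abs_sin_le_one _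
  constructor
  · have := abs_integral_mul_deriv_le hp (fun x _ => hasDerivAt_sin_mul_div hc.ne' x) hp'
      ((by fun_prop : Continuous fun x => cos (c * x)).intervalIntegrable a b) hM' hB
    rwa [mul_one_div] at this
  · have hB' : ∀ x, |-cos (c * x) / c| ≤ 1 / c := fun x => by
      rw [abs_div, abs_neg, abs_of_pos hc]; gcongr; exact abs_cos_le_one _
    have := abs_integral_mul_deriv_le hp (fun x _ => hasDerivAt_neg_cos_mul_div hc.ne' x) hp'
      ((by fun_prop : Continuous fun x => sin (c * x)).intervalIntegrable a b) hM' hB'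
    rwa [mul_one_div] at this

theorem exists_abs_integral_mul_cos_le_and_sin_le_of_dvd {k : ℕ} (ha : (X - C a) ^ k ∣ p)
    (hb : (X - C b) ^ k ∣ p) :
    ∃ K, ∀ c > 0, |∫ x in a..b, p.eval x * cos (c * x)| ≤ K / c ^ (k + 1) ∧
      |∫ x in a..b, p.eval x * sin (c * x)| ≤ K / c ^ (k + 1) := by
  induction k generalizing p with
  | zero => simpa using p.exists_abs_integral_mul_cos_le_and_sin_le a b
  | succ k ih =>
    have hroot_a : p.IsRoot a := dvd_iff_isRoot.mp ((dvd_pow_self _ k.succ_ne_zero).trans ha)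
    have hroot_b : p.IsRoot b := dvd_iff_isRoot.mp ((dvd_pow_self _ k.succ_ne_zero).trans hb)
    obtain ⟨K, hK⟩ := ih (derivative p)
      (by simpa using pow_sub_one_dvd_derivative_of_pow_dvd ha)
      (by simpa using pow_sub_one_dvd_derivative_of_pow_dvd hb)
    refine ⟨K, fun c hc => ?_⟩
    have hp : ∀ x ∈ uIcc a b, HasDerivAt (fun x => p.eval x) ((derivative p).eval x) x :=
      fun x _ => p.hasDerivAt x
    have hp' : IntervalIntegrable (fun x => (derivative p).eval x) volume a b :=
      (derivative p).continuous.intervalIntegrable a b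
    rw [integral_mul_cos_eq_of_eq_zero hp hp' hroot_a.eq_zero hroot_b.eq_zero hc.ne',
      integral_mul_sin_eq_of_eq_zero hp hp' hroot_a.eq_zero hroot_b.eq_zero hc.ne', pow_succ,
      ← div_div]
    simp only [abs_div, abs_neg, abs_of_pos hc]
    obtain ⟨hcos, hsin⟩ := hK c hc
    exact ⟨by gcongr, by gcongr⟩

end Polynomial

theorem integral_mul_cos_sq {g : ℝ → ℝ} {a b : ℝ} (hg : IntervalIntegrable g volume a b)
    (n : ℝ) :
    ∫ x in a..b, g x * cos (n * x) ^ 2 =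
      (∫ x in a..b, g x) / 2 + (∫ x in a..b, g x * cos (2 * n * x)) / 2 := by
  have hcos : IntervalIntegrable (fun x => g x * cos (2 * n * x)) volume a b :=
    hg.mul_continuousOn (by fun_prop)
  rw [← intervalIntegral.integral_div, ← intervalIntegral.integral_div,
    ← intervalIntegral.integral_add (hg.div_const 2) (hcos.div_const 2)]
  refine intervalIntegral.integral_congr fun x _ => ?_
  simp only [cos_sq, mul_assoc]
  ring

theorem integral_sub_mul_sub_pow_three (a b : ℝ) :
    ∫ x in a..b, ((x - a) * (b - x)) ^ 3 = (b - a) ^ 7 / 140 := by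
  have hF : ∀ x ∈ uIcc a b, HasDerivAt (fun x => (b - a) ^ 3 * (x - a) ^ 4 / 4
      - 3 * (b - a) ^ 2 * (x - a) ^ 5 / 5 + (b - a) * (x - a) ^ 6 / 2 - (x - a) ^ 7 / 7)
      (((x - a) * (b - x)) ^ 3) x := fun x _ => by
    have h := (hasDerivAt_id' x).sub_const a
    exact (((((h.pow 4).const_mul _).div_const 4).sub (((h.pow 5).const_mul _).div_const 5)).add
      (((h.pow 6).const_mul _).div_const 2)).sub ((h.pow 7).div_const 7) |>.congr_deriv (by ring)
  rw [intervalIntegral.integral_eq_sub_of_hasDerivAt hF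
    ((by fun_prop : Continuous fun x => ((x - a) * (b - x)) ^ 3).intervalIntegrable a b)]
  ring

theorem stmt_0_general (a b : ℝ) :
    ∃ C : ℝ, ∀ n : ℕ, 1 ≤ n →
      |(∫ x in a..b, ((x - a) * (b - x))^3 * (Real.cos (n * x))^2) - (b - a)^7 / 280|
        ≤ C / (n : ℝ)^4 := by
  obtain ⟨K, hK⟩ := exists_abs_integral_mul_cos_le_and_sin_le_of_dvd
    (((X - C a) * (C b - X)) ^ 3) a b (k := 3)
    ⟨(C b - X) ^ 3, by ring⟩ ⟨-(X - C a) ^ 3, by ring⟩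
  refine ⟨K / 32, fun n hn => ?_⟩
  have hn₀ : (0 : ℝ) < n := by exact_mod_cast hn
  have hosc := (hK (2 * n) (by positivity)).1
  simp only [eval_pow, eval_mul, eval_sub, eval_X, eval_C] at hosc
  have hw : Continuous fun x => ((x - a) * (b - x)) ^ 3 := by fun_prop
  rw [integral_mul_cos_sq (hw.intervalIntegrable a b), integral_sub_mul_sub_pow_three]
  calc _ = |(∫ x in a..b, ((x - a) * (b - x)) ^ 3 * cos (2 * n * x)) / 2| := by
        congr 1; ring
    _ = |∫ x in a..b, ((x - a) * (b - x)) ^ 3 * cos (2 * n * x)| / 2 := by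
        rw [abs_div, abs_two]
    _ ≤ K / (2 * n) ^ (3 + 1) / 2 := by gcongr
    _ = K / 32 / n ^ 4 := by ring

theorem stmt_0 (a b : ℝ) (hab : a < b) :
    ∃ C : ℝ, ∀ n : ℕ, 1 ≤ n →
      |(∫ x in a..b, ((x - a) * (b - x))^3 * (Real.cos (n * x))^2) - (b - a)^7 / 280|
        ≤ C / (n : ℝ)^4 :=
  stmt_0_general a b
end

section
/- Let a1 < a2 < a3 < a4 be real numbers. Define K₋' = ∫_{a1}^{a2} dx/√(-P(x)) and K₋'' = ∫_{a3}^{a4} dx/√(-P(x)), where P(x) = ∏_{j=1}^4 (x-a_j). Then K₋' = K₋'' (both integrals converge and are equal). -/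
open Real MeasureTheory intervalIntegral Set
open scoped Interval

/-!
The Möbius map `T x = p + c / (p - x)`, with `p` and `c > 0` chosen so that
`(p - a₁) (a₃ - p) = (p - a₂) (a₄ - p) = c`, sends `a₁ ↦ a₃`, `a₂ ↦ a₄` and is increasing on
`[a₁, a₂]`. It pairs the roots of `P` as `{a₁, a₃}` and `{a₂, a₄}`, and on each pair it satisfies
`(T x - a) (T x - b) = T' x · (x - a) (b - x)`; hence `-P (T x) = (T' x)² · (-P x)`, i.e. the
differential `dx / √(-P x)` is invariant under `T`. Substituting `y = T x` turns the integral over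
`[a₁, a₂]` into the one over `[a₃, a₄]`. Convergence at each endpoint is that of `∫ dx / √(x - a)`.
-/

theorem intervalIntegrable_one_div_sqrt_sub_mul {a b : ℝ} (hab : a ≤ b) {G : ℝ → ℝ}
    (hG : ContinuousOn G (Icc a b)) (hG_pos : ∀ x ∈ Icc a b, 0 < G x) :
    IntervalIntegrable (fun x => 1 / √((x - a) * G x)) volume a b := by
  have hsing : IntervalIntegrable (fun x => (x - a) ^ (-(1 / 2) : ℝ)) volume a b := by
    simpa using (intervalIntegrable_rpow' (a := a - a) (b := b - a)
      (r := -(1 / 2)) (by norm_num)).comp_sub_right a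
  have hbdd : ContinuousOn (fun x => (√(G x))⁻¹) (uIcc a b) := by
    rw [uIcc_of_le hab]
    exact hG.sqrt.inv₀ fun x hx => (sqrt_pos.2 (hG_pos x hx)).ne'
  refine (hsing.mul_continuousOn hbdd).congr fun x hx => ?_
  rw [uIoc_of_le hab] at hx
  have hxa : 0 ≤ x - a := by linarith [hx.1]
  rw [sqrt_mul hxa, rpow_neg hxa, ← sqrt_eq_rpow, one_div, mul_inv]

theorem intervalIntegrable_one_div_sqrt_sub_mul' {a b : ℝ} (hab : a ≤ b) {G : ℝ → ℝ}
    (hG : ContinuousOn G (Icc a b)) (hG_pos : ∀ x ∈ Icc a b, 0 < G x) :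
    IntervalIntegrable (fun x => 1 / √((b - x) * G x)) volume a b := by
  have hmaps : MapsTo (fun x => a + b - x) (Icc a b) (Icc a b) :=
    fun x hx => ⟨by linarith [hx.2], by linarith [hx.1]⟩
  have h := intervalIntegrable_one_div_sqrt_sub_mul hab (G := fun x => G (a + b - x))
    (hG.comp (by fun_prop) hmaps) fun x hx => hG_pos _ (hmaps hx)
  have e₁ : ∀ x, a + b - x - a = b - x := fun x => by ring
  have e₂ : ∀ x, a + b - (a + b - x) = x := fun x => by ring
  simpa only [e₁, e₂, add_sub_cancel_left, add_sub_cancel_right] using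
    (h.comp_sub_left (a + b)).symm

theorem intervalIntegrable_one_div_sqrt_sub_mul_sub_mul {a b : ℝ} (hab : a < b) {F : ℝ → ℝ}
    (hF : ContinuousOn F (Icc a b)) (hF_pos : ∀ x ∈ Icc a b, 0 < F x) :
    IntervalIntegrable (fun x => 1 / √((x - a) * (b - x) * F x)) volume a b := by
  obtain ⟨m, ham, hmb⟩ := exists_between hab
  have hFa : ∀ x ∈ Icc a m, x ∈ Icc a b := fun x hx => ⟨hx.1, by linarith [hx.2]⟩
  have hFb : ∀ x ∈ Icc m b, x ∈ Icc a b := fun x hx => ⟨by linarith [hx.1], hx.2⟩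
  refine IntervalIntegrable.trans (b := m) ?_ ?_
  · simpa only [mul_assoc] using intervalIntegrable_one_div_sqrt_sub_mul ham.le
      (G := fun x => (b - x) * F x) ((continuousOn_const.sub continuousOn_id).mul (hF.mono hFa))
      fun x hx => mul_pos (by linarith [hx.2]) (hF_pos x (hFa x hx))
  · simpa only [mul_comm (_ - a), mul_assoc] using intervalIntegrable_one_div_sqrt_sub_mul'
      hmb.le (G := fun x => (x - a) * F x)
      ((continuousOn_id.sub continuousOn_const).mul (hF.mono hFb))
      fun x hx => mul_pos (by linarith [hx.1]) (hF_pos x (hFb x hx))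

noncomputable def moebiusInvolution (p c x : ℝ) : ℝ := p + c / (p - x)

theorem hasDerivAt_moebiusInvolution {p c x : ℝ} (hx : x ≠ p) :
    HasDerivAt (moebiusInvolution p c) (c / (p - x) ^ 2) x := by
  have hpx : p - x ≠ 0 := sub_ne_zero.2 hx.symm
  exact (((hasDerivAt_const x c).div ((hasDerivAt_id x).const_sub p) hpx).const_add p).congr_deriv
    (by simp)

theorem moebiusInvolution_eq_of_mul_eq {p c a b : ℝ} (hab : (p - a) * (b - p) = c)
    (ha : a ≠ p) :
    moebiusInvolution p c a = b := by
  have hpa : p - a ≠ 0 := sub_ne_zero.2 ha.symm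
  rw [moebiusInvolution, ← hab]
  field_simp
  ring

theorem moebiusInvolution_sub_mul_sub {p c a b x : ℝ} (hab : (p - a) * (b - p) = c)
    (hx : x ≠ p) :
    (moebiusInvolution p c x - a) * (moebiusInvolution p c x - b) =
      c / (p - x) ^ 2 * ((x - a) * (b - x)) := by
  have hpx : p - x ≠ 0 := sub_ne_zero.2 hx.symm
  rw [moebiusInvolution, ← hab]
  field_simp
  ring

theorem neg_quartic_moebiusInvolution {p c a₁ a₂ a₃ a₄ x : ℝ}
    (h₁₃ : (p - a₁) * (a₃ - p) = c) (h₂₄ : (p - a₂) * (a₄ - p) = c) (hx : x ≠ p) :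
    -((moebiusInvolution p c x - a₁) * (moebiusInvolution p c x - a₂) *
        (moebiusInvolution p c x - a₃) * (moebiusInvolution p c x - a₄)) =
      (c / (p - x) ^ 2) ^ 2 * -((x - a₁) * (x - a₂) * (x - a₃) * (x - a₄)) := by
  have h₁ := moebiusInvolution_sub_mul_sub h₁₃ hx
  have h₂ := moebiusInvolution_sub_mul_sub h₂₄ hx
  generalize moebiusInvolution p c x = y at h₁ h₂ ⊢
  generalize c / (p - x) ^ 2 = k at h₁ h₂ ⊢
  linear_combination -(y - a₂) * (y - a₄) * h₁ - k * ((x - a₁) * (a₃ - x)) * h₂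

theorem mul_one_div_sqrt_sq_mul {k : ℝ} (hk : 0 < k) (v : ℝ) :
    k * (1 / √(k ^ 2 * v)) = 1 / √v := by
  rw [sqrt_mul (sq_nonneg k), sqrt_sq hk.le, mul_one_div, div_mul_cancel_left₀ hk.ne', one_div]

theorem exists_cross_mul_eq {a₁ a₂ a₃ a₄ : ℝ} (h₁₂ : a₁ < a₂) (h₂₃ : a₂ < a₃) (h₃₄ : a₃ < a₄) :
    ∃ p, a₂ < p ∧ p < a₃ ∧ (p - a₁) * (a₃ - p) = (p - a₂) * (a₄ - p) := by
  have hD : 0 < a₂ + a₄ - a₁ - a₃ := by linarith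
  refine ⟨(a₂ * a₄ - a₁ * a₃) / (a₂ + a₄ - a₁ - a₃), ?_, ?_, ?_⟩
  · rw [lt_div_iff₀ hD]; nlinarith [mul_pos (sub_pos.2 h₁₂) (sub_pos.2 h₂₃)]
  · rw [div_lt_iff₀ hD]; nlinarith [mul_pos (sub_pos.2 h₃₄) (sub_pos.2 h₂₃)]
  · field_simp; ring

theorem stmt_8 (a1 a2 a3 a4 : ℝ) (h12 : a1 < a2) (h23 : a2 < a3) (h34 : a3 < a4)
    (P : ℝ → ℝ) (hP : ∀ x, P x = (x - a1) * (x - a2) * (x - a3) * (x - a4)) :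
    IntervalIntegrable (fun x => 1 / Real.sqrt (-P x)) volume a1 a2 ∧
    IntervalIntegrable (fun x => 1 / Real.sqrt (-P x)) volume a3 a4 ∧
    (∫ x in a1..a2, 1 / Real.sqrt (-P x)) = ∫ x in a3..a4, 1 / Real.sqrt (-P x) := by
  have hP₁₂ : ∀ x, -P x = (x - a1) * (a2 - x) * ((a3 - x) * (a4 - x)) := fun x => by
    rw [hP]; ring
  have hP₃₄ : ∀ x, -P x = (x - a3) * (a4 - x) * ((x - a1) * (x - a2)) := fun x => by
    rw [hP]; ring
  refine ⟨?_, ?_, ?_⟩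
  · simp_rw [hP₁₂]
    exact intervalIntegrable_one_div_sqrt_sub_mul_sub_mul h12 (by fun_prop)
      fun x hx => mul_pos (by linarith [hx.2]) (by linarith [hx.2])
  · simp_rw [hP₃₄]
    exact intervalIntegrable_one_div_sqrt_sub_mul_sub_mul h34 (by fun_prop)
      fun x hx => mul_pos (by linarith [hx.1]) (by linarith [hx.1])
  obtain ⟨p, hp₂, hp₃, hcross⟩ := exists_cross_mul_eq h12 h23 h34
  set c := (p - a1) * (a3 - p) with hc
  have hc_pos : 0 < c := mul_pos (by linarith) (by linarith)
  have hlt : ∀ x ∈ [[a1, a2]], x < p := fun x hx => by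
    rw [uIcc_of_le h12.le] at hx
    linarith [hx.2]
  rw [← moebiusInvolution_eq_of_mul_eq hc.symm (by linarith),
    ← moebiusInvolution_eq_of_mul_eq hcross.symm (by linarith),
    ← integral_deriv_smul_comp_of_deriv_nonneg]
  · refine integral_congr fun x hx => ?_
    have hk : 0 < c / (p - x) ^ 2 := div_pos hc_pos (pow_pos (sub_pos.2 (hlt x hx)) 2)
    simp only [smul_eq_mul, Function.comp_apply, hP]
    rw [neg_quartic_moebiusInvolution hc.symm hcross.symm (hlt x hx).ne,
      mul_one_div_sqrt_sq_mul hk]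
  · exact fun x hx =>
      (hasDerivAt_moebiusInvolution (hlt x hx).ne).continuousAt.continuousWithinAt
  · exact fun x hx => hasDerivAt_moebiusInvolution (hlt x (Ioo_subset_Icc_self hx)).ne
  · exact fun x hx => by positivity
end

section
/- Let P be a real polynomial with P(a) = 0 and P'(a) ≠ 0 for some real a, and suppose P < 0 on (a, a+δ] for some δ > 0 (so P'(a) < 0). Then ∫_a^x dt/√(-P(t)) = 2√((a-x)/P'(a)) + O((x-a)^{3/2}) as x → a⁺; precisely there exist C, δ' > 0 such that |∫_a^x dt/√(-P(t)) - 2√((x-a)/(-P'(a)))| ≤ C (x-a)^{3/2} for all x ∈ (a, a+δ']. -/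
/-!
Factor `P = (X - a) Q`. Then `Q(a) = P'(a)`, which is negative because `Q < 0` just to the
right of `a`, and `1 / √(-P t) = h t / √(t - a)` with `h = (-Q)^(-1/2)` differentiable at `a`.
Hence `|h t - h a| ≤ K (t - a)` near `a`; the main part `h a / √(t - a)` integrates to
`2 √((x - a) / -P'(a))` and the error is at most `∫ K √(t - a) = (2K/3) (x - a)^(3/2)`.
-/

open Real Polynomial Set MeasureTheory intervalIntegral Filter Topology

section SqrtIntegrals

variable {a x : ℝ}

theorem intervalIntegrable_sub_rpow {r : ℝ} (hr : -1 < r) :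
    IntervalIntegrable (fun t ↦ (t - a) ^ r) volume a x := by
  simpa using (intervalIntegrable_rpow' (a := 0) (b := x - a) hr).comp_sub_right a

theorem integral_sub_rpow {r : ℝ} (hr : -1 < r) :
    ∫ t in a..x, (t - a) ^ r = (x - a) ^ (r + 1) / (r + 1) := by
  rw [integral_comp_sub_right (· ^ r), integral_rpow (.inl hr), sub_self,
    zero_rpow (by linarith), sub_zero]

theorem inv_sqrt_eqOn_sub_rpow (hax : a ≤ x) :
    EqOn (fun t ↦ (√(t - a))⁻¹) (fun t ↦ (t - a) ^ (-(1 / 2) : ℝ)) (uIcc a x) := by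
  intro t ht
  rw [uIcc_of_le hax] at ht
  simp only [rpow_neg (sub_nonneg.2 ht.1), sqrt_eq_rpow]

theorem intervalIntegrable_inv_sqrt_sub (hax : a ≤ x) :
    IntervalIntegrable (fun t ↦ (√(t - a))⁻¹) volume a x :=
  (intervalIntegrable_sub_rpow (r := -(1 / 2)) (by norm_num)).congr
    ((inv_sqrt_eqOn_sub_rpow hax).symm.mono uIoc_subset_uIcc)

theorem integral_inv_sqrt_sub (hax : a ≤ x) :
    ∫ t in a..x, (√(t - a))⁻¹ = 2 * √(x - a) := by
  rw [integral_congr (inv_sqrt_eqOn_sub_rpow hax), integral_sub_rpow (by norm_num),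
    sqrt_eq_rpow]
  norm_num
  ring

theorem integral_sqrt_sub : ∫ t in a..x, √(t - a) = 2 / 3 * (x - a) ^ ((3 : ℝ) / 2) := by
  simp_rw [sqrt_eq_rpow]
  rw [integral_sub_rpow (by norm_num)]
  norm_num
  ring

end SqrtIntegrals

theorem abs_integral_div_sqrt_sub_sub_le {h : ℝ → ℝ} {a x K : ℝ} (hh : Measurable h)
    (hax : a ≤ x) (hK : ∀ t ∈ Ioc a x, |h t - h a| ≤ K * (t - a)) :
    |(∫ t in a..x, h t / √(t - a)) - 2 * h a * √(x - a)| ≤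
      2 / 3 * K * (x - a) ^ ((3 : ℝ) / 2) := by
  have hsing : IntervalIntegrable (fun t ↦ h a / √(t - a)) volume a x := by
    simpa only [div_eq_mul_inv] using (intervalIntegrable_inv_sqrt_sub hax).const_mul (h a)
  have hsing_integral : ∫ t in a..x, h a / √(t - a) = 2 * h a * √(x - a) := by
    simp_rw [div_eq_mul_inv]
    rw [intervalIntegral.integral_const_mul, integral_inv_sqrt_sub hax]
    ring
  have hbound : ∀ t ∈ Ioc a x, ‖(h t - h a) / √(t - a)‖ ≤ K * √(t - a) := by
    intro t ht
    have hpos : 0 < √(t - a) := sqrt_pos.2 (sub_pos.2 ht.1)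
    simp only [norm_div, norm_eq_abs, abs_of_pos hpos]
    rw [div_le_iff₀ hpos, mul_assoc, mul_self_sqrt (sub_nonneg.2 ht.1.le)]
    exact hK t ht
  have hsqrt : IntervalIntegrable (fun t ↦ K * √(t - a)) volume a x := by
    apply Continuous.intervalIntegrable; fun_prop
  have hrem : IntervalIntegrable (fun t ↦ (h t - h a) / √(t - a)) volume a x := by
    refine hsqrt.mono_fun' ((hh.sub_const _).div (by fun_prop)).aestronglyMeasurable ?_
    rw [uIoc_of_le hax]
    exact (ae_restrict_iff' measurableSet_Ioc).2 (ae_of_all _ hbound)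
  have hsplit : ∫ t in a..x, h t / √(t - a) =
      (∫ t in a..x, h a / √(t - a)) + ∫ t in a..x, (h t - h a) / √(t - a) := by
    rw [← integral_add hsing hrem]
    congr 1 with t
    ring
  calc |(∫ t in a..x, h t / √(t - a)) - 2 * h a * √(x - a)|
      = ‖∫ t in a..x, (h t - h a) / √(t - a)‖ := by
        rw [hsplit, hsing_integral, add_sub_cancel_left, norm_eq_abs]
    _ ≤ ∫ t in a..x, K * √(t - a) :=
        norm_integral_le_of_norm_le hax (ae_of_all _ hbound) hsqrt
    _ = 2 / 3 * K * (x - a) ^ ((3 : ℝ) / 2) := by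
        rw [intervalIntegral.integral_const_mul, integral_sqrt_sub]; ring

theorem DifferentiableAt.exists_abs_sub_le_on_Ioc {h : ℝ → ℝ} {a : ℝ}
    (hh : DifferentiableAt ℝ h a) :
    ∃ K δ : ℝ, 0 < K ∧ 0 < δ ∧ ∀ t ∈ Ioc a (a + δ), |h t - h a| ≤ K * (t - a) := by
  obtain ⟨K, hK_pos, hK⟩ := hh.hasDerivAt.isBigO_sub.exists_pos
  obtain ⟨u, hu, hsub⟩ := mem_nhdsGT_iff_exists_Ioc_subset.1 (nhdsWithin_le_nhds hK.bound)
  refine ⟨K, u - a, hK_pos, sub_pos.2 hu, fun t ht ↦ ?_⟩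
  have := hsub (by rwa [add_sub_cancel] at ht)
  rwa [mem_ofPred_eq, norm_eq_abs, norm_of_nonneg (sub_nonneg.2 ht.1.le)] at this

theorem stmt_13 (P : Polynomial ℝ) (a δ : ℝ) (hδ : 0 < δ)
    (ha : P.eval a = 0) (ha' : P.derivative.eval a ≠ 0)
    (hneg : ∀ x ∈ Set.Ioc a (a + δ), P.eval x < 0) :
    ∃ C δ' : ℝ, 0 < C ∧ 0 < δ' ∧ ∀ x ∈ Set.Ioc a (a + δ'),
      |(∫ t in a..x, 1 / Real.sqrt (-P.eval t)) -
          2 * Real.sqrt ((x - a) / (-P.derivative.eval a))|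
        ≤ C * (x - a) ^ ((3 : ℝ) / 2) := by
  obtain ⟨Q, rfl⟩ : X - C a ∣ P := dvd_iff_isRoot.2 ha
  have hder : ((X - C a) * Q).derivative.eval a = Q.eval a := by simp [derivative_mul]
  have hQ_nonpos : Q.eval a ≤ 0 := by
    refine le_of_tendsto (Q.continuousAt.mono_left nhdsWithin_le_nhds : Tendsto _ (𝓝[>] a) _) ?_
    filter_upwards [Ioc_mem_nhdsGT (lt_add_of_pos_right a hδ)] with t ht
    have hPt := hneg t ht
    rw [eval_mul, eval_sub, eval_X, eval_C] at hPt
    exact (neg_of_mul_neg_right hPt (sub_pos.2 ht.1).le).le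
  have hQ : 0 < -Q.eval a := neg_pos.2 (hQ_nonpos.lt_of_ne (hder ▸ ha'))
  set h : ℝ → ℝ := fun t ↦ (√(-Q.eval t))⁻¹ with h_def
  obtain ⟨K, δ', hK_pos, hδ', hK⟩ := (Q.differentiableAt.neg.sqrt hQ.ne').inv
    (sqrt_pos.2 hQ).ne' |>.exists_abs_sub_le_on_Ioc
  refine ⟨2 / 3 * K, δ', by positivity, hδ', fun x hx ↦ ?_⟩
  have hintegrand : EqOn (fun t ↦ 1 / √(-((X - C a) * Q).eval t)) (fun t ↦ h t / √(t - a))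
      (uIcc a x) := by
    intro t ht
    rw [uIcc_of_le hx.1.le] at ht
    simp only [h_def, eval_mul, eval_sub, eval_X, eval_C, ← mul_neg,
      sqrt_mul (sub_nonneg.2 ht.1)]
    ring
  have hleading : 2 * √((x - a) / -((X - C a) * Q).derivative.eval a) = 2 * h a * √(x - a) := by
    rw [hder, sqrt_div' _ hQ.le]; ring
  rw [integral_congr hintegrand, hleading]
  exact abs_integral_div_sqrt_sub_sub_le (by fun_prop) hx.1.le
    fun t ht ↦ hK t ⟨ht.1, ht.2.trans hx.2⟩
end
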